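/- arXiv:1211.6822 — 2 statements merged into one kernel-verified Lean document; each statement's English description precedes it below -/
import Mathlib

section
/- Let −x be symmetric positive definite and y ∈ ℝ^d, and let g(x,y) = ∫_{[0,∞)^d} exp(tᵀxt + yᵀt) dt, viewed as a smooth function of the independent entries x_{ij} (i ≤ j) of x and of y. Then ∂g/∂x_{ij} = 2 ∂²g/∂y_i∂y_j for i < j, and ∂g/∂x_{ii} = ∂²g/∂y_i². -/
open MeasureTheory Real Matrix

/-! Positive definiteness of `-x` gives `tᵀ x t ≤ -c ∑ₖ tₖ²`, and half of this decay survives a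
small perturbation of `x`. By AM-GM (`a |u| ≤ a² / 2c + c u² / 2`) the Gaussian
`exp (-(c / 2) ∑ₖ tₖ²)` then absorbs the linear term `y ⬝ᵥ t` as well as any weight growing like
`exp (m ∑ₖ |tₖ|)`, so the integrand is dominated locally uniformly in `(x, y)` and we may
differentiate under the integral sign. The derivative in `x` along `E` brings down `tᵀ E t`, which
is `2 tᵢ tⱼ` for `E = Eᵢⱼ + Eⱼᵢ` and `tᵢ²` for `E = Eᵢᵢ`, while `∂²/∂yᵢ∂yⱼ` brings down `tᵢ tⱼ`. -/

lemma abs_mul_le_mul_exp_add_one {a b K C m σ : ℝ} (hK : 0 ≤ K) (ha : |a| ≤ K * σ)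
    (hb : |b| ≤ C * exp (m * σ)) : |a * b| ≤ K * C * exp ((m + 1) * σ) := by
  have hσ : σ ≤ exp σ := (le_add_of_nonneg_right zero_le_one).trans (add_one_le_exp σ)
  calc |a * b| ≤ (K * exp σ) * (C * exp (m * σ)) := by
        rw [abs_mul]
        exact mul_le_mul (ha.trans (mul_le_mul_of_nonneg_left hσ hK)) hb (abs_nonneg _)
          (by positivity)
    _ = K * C * exp ((m + 1) * σ) := by rw [add_one_mul, exp_add]; ring

lemma add_mul_le_neg_half_mul {q r s c K σ : ℝ} (hσ : 0 ≤ σ) (hq : q ≤ -(c * σ))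
    (hr : |r| ≤ K * σ) (hs : |s| < c / (2 * (|K| + 1))) : q + s * r ≤ -(c / 2 * σ) := by
  have hs' : |s| * (|K| + 1) ≤ c / 2 := by
    have := (lt_div_iff₀ (by positivity)).1 hs
    linarith
  have hr' : |r| ≤ (|K| + 1) * σ :=
    hr.trans (mul_le_mul_of_nonneg_right (by linarith [le_abs_self K]) hσ)
  have hsr : s * r ≤ c / 2 * σ := calc
    s * r ≤ |s| * |r| := (le_abs_self _).trans (abs_mul s r).le
    _ ≤ |s| * ((|K| + 1) * σ) := mul_le_mul_of_nonneg_left hr' (abs_nonneg s)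
    _ ≤ c / 2 * σ := by rw [← mul_assoc]; exact mul_le_mul_of_nonneg_right hs' hσ
  linarith

section

variable {ι : Type*} [Fintype ι]

lemma sum_sq_le_two_mul_exp_sum_abs (t : ι → ℝ) : ∑ k, t k ^ 2 ≤ 2 * exp (∑ k, |t k|) := by
  have hsq : ∑ k, t k ^ 2 ≤ (∑ k, |t k|) ^ 2 := by
    simpa only [sq_abs] using
      Finset.sum_sq_le_sq_sum_of_nonneg (s := Finset.univ) fun k _ => abs_nonneg (t k)
  have hσ : 0 ≤ ∑ k, |t k| := Finset.sum_nonneg fun k _ => abs_nonneg (t k)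
  linarith [quadratic_le_exp_of_nonneg hσ]

lemma mul_sum_abs_sub_mul_sum_sq_le (a : ℝ) {c : ℝ} (hc : 0 < c) (t : ι → ℝ) :
    a * ∑ k, |t k| - c * ∑ k, t k ^ 2
      ≤ Fintype.card ι * (a ^ 2 / (2 * c)) - c / 2 * ∑ k, t k ^ 2 := by
  have hamgm : ∀ u : ℝ, a * |u| - c * u ^ 2 ≤ a ^ 2 / (2 * c) - c / 2 * u ^ 2 := fun u => by
    have hsq : 0 ≤ (a - c * |u|) ^ 2 / (2 * c) := by positivity
    have hexpand : (a - c * |u|) ^ 2 / (2 * c) = a ^ 2 / (2 * c) - a * |u| + c / 2 * u ^ 2 := by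
      field_simp
      linear_combination c ^ 2 * sq_abs u
    linarith
  calc a * ∑ k, |t k| - c * ∑ k, t k ^ 2 = ∑ k, (a * |t k| - c * t k ^ 2) := by
        rw [Finset.sum_sub_distrib, Finset.mul_sum, Finset.mul_sum]
    _ ≤ ∑ k, (a ^ 2 / (2 * c) - c / 2 * t k ^ 2) := Finset.sum_le_sum fun k _ => hamgm (t k)
    _ = Fintype.card ι * (a ^ 2 / (2 * c)) - c / 2 * ∑ k, t k ^ 2 := by
        rw [Finset.sum_sub_distrib, Finset.sum_const, Finset.card_univ, nsmul_eq_mul,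
          Finset.mul_sum]

lemma abs_dotProduct_le (v t : ι → ℝ) : |v ⬝ᵥ t| ≤ ‖v‖ * ∑ k, |t k| := by
  rw [Finset.mul_sum]
  refine (Finset.abs_sum_le_sum_abs _ _).trans (Finset.sum_le_sum fun k _ => ?_)
  rw [abs_mul, ← Real.norm_eq_abs (v k)]
  exact mul_le_mul_of_nonneg_right (norm_le_pi_norm v k) (abs_nonneg _)

lemma sum_sum_mul_mul_eq_dotProduct_mulVec (x : Matrix ι ι ℝ) (t : ι → ℝ) :
    ∑ a, ∑ b, x a b * t a * t b = t ⬝ᵥ x *ᵥ t := by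
  simp only [dotProduct, mulVec, Finset.mul_sum]
  congr! 2 with a _ b _
  ring

lemma abs_dotProduct_mulVec_le (E : Matrix ι ι ℝ) (t : ι → ℝ) :
    |t ⬝ᵥ E *ᵥ t| ≤ (∑ a, ∑ b, |E a b|) * ∑ k, t k ^ 2 := by
  have hsq : ∀ a, t a ^ 2 ≤ ∑ k, t k ^ 2 := fun a =>
    Finset.single_le_sum (f := fun k => t k ^ 2) (fun k _ => sq_nonneg _) (Finset.mem_univ a)
  rw [← sum_sum_mul_mul_eq_dotProduct_mulVec, Finset.sum_mul]
  refine (Finset.abs_sum_le_sum_abs _ _).trans (Finset.sum_le_sum fun a _ => ?_)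
  rw [Finset.sum_mul]
  refine (Finset.abs_sum_le_sum_abs _ _).trans (Finset.sum_le_sum fun b _ => ?_)
  rw [mul_assoc, abs_mul]
  refine mul_le_mul_of_nonneg_left ?_ (abs_nonneg _)
  nlinarith [hsq a, hsq b, sq_abs (t a), sq_abs (t b), abs_mul (t a) (t b),
    sq_nonneg (|t a| - |t b|)]

lemma dotProduct_single_one_mulVec [DecidableEq ι] (i j : ι) (t : ι → ℝ) :
    t ⬝ᵥ single i j 1 *ᵥ t = t i * t j := by
  rw [single_mulVec, one_mul]
  exact dotProduct_single t (t j) i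

lemma Matrix.PosDef.exists_pos_mul_sum_sq_le {A : Matrix ι ι ℝ} (hA : A.PosDef) :
    ∃ c > 0, ∀ t : ι → ℝ, c * ∑ k, t k ^ 2 ≤ t ⬝ᵥ A *ᵥ t := by
  rcases isEmpty_or_nonempty ι with hι | hι
  · exact ⟨1, one_pos, fun t => by simp⟩
  let f : EuclideanSpace ℝ ι → ℝ := fun u => u.ofLp ⬝ᵥ A *ᵥ u.ofLp
  obtain ⟨u, hu, hmin⟩ := (isCompact_sphere (0 : EuclideanSpace ℝ ι) 1).exists_isMinOn
    (NormedSpace.sphere_nonempty.2 zero_le_one) (by fun_prop : Continuous f).continuousOn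
  have hu0 : u.ofLp ≠ 0 := by
    rintro h
    rw [show u = 0 from (WithLp.ofLp_injective 2) (by simpa using h)] at hu
    simp at hu
  refine ⟨f u, hA.dotProduct_mulVec_pos hu0, fun t => ?_⟩
  rcases eq_or_ne t 0 with rfl | ht
  · simp
  set r := ‖WithLp.toLp 2 t‖
  have hr : 0 < r := norm_pos_iff.2 (by simpa using ht)
  have hr2 : r ^ 2 = ∑ k, t k ^ 2 := EuclideanSpace.real_norm_sq_eq _
  have hmem : r⁻¹ • WithLp.toLp 2 t ∈ Metric.sphere (0 : EuclideanSpace ℝ ι) 1 := by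
    simp [norm_smul, hr.ne', r]
  have hscale : f (r⁻¹ • WithLp.toLp 2 t) = r⁻¹ ^ 2 * (t ⬝ᵥ A *ᵥ t) := by
    simp [f, mulVec_smul, dotProduct_smul, smul_dotProduct]
    ring
  have hle : f u ≤ r⁻¹ ^ 2 * (t ⬝ᵥ A *ᵥ t) := hscale ▸ isMinOn_iff.1 hmin _ hmem
  rw [← hr2]
  calc f u * r ^ 2 ≤ r⁻¹ ^ 2 * (t ⬝ᵥ A *ᵥ t) * r ^ 2 := by gcongr
    _ = t ⬝ᵥ A *ᵥ t := by field_simp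

lemma exists_pos_dotProduct_mulVec_le_of_posDef_neg {x : Matrix ι ι ℝ} (hx : (-x).PosDef) :
    ∃ c > 0, ∀ t : ι → ℝ, t ⬝ᵥ x *ᵥ t ≤ -(c * ∑ k, t k ^ 2) := by
  obtain ⟨c, hc, hcx⟩ := hx.exists_pos_mul_sum_sq_le
  refine ⟨c, hc, fun t => ?_⟩
  linarith [hcx t, show t ⬝ᵥ (-x) *ᵥ t = -(t ⬝ᵥ x *ᵥ t) by simp [neg_mulVec]]

lemma integrable_exp_neg_mul_sum_sq {c : ℝ} (hc : 0 < c) :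
    Integrable (fun t : ι → ℝ => exp (-(c * ∑ k, t k ^ 2))) := by
  refine (GaussianFourier.integrable_cexp_neg_mul_sum_add (b := c) (by simpa using hc) 0).norm.congr
    (ae_of_all _ fun t => ?_)
  simp [Complex.norm_exp, ← Complex.ofReal_pow, ← Complex.ofReal_sum]

variable {φ q : (ι → ℝ) → ℝ} {C m c : ℝ}

lemma abs_mul_exp_le_gaussian {B : ℝ} (hc : 0 < c) {t y : ι → ℝ}
    (hφ : |φ t| ≤ C * exp (m * ∑ k, |t k|)) (hq : q t ≤ -(c * ∑ k, t k ^ 2)) (hy : ‖y‖ ≤ B) :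
    |φ t * exp (q t + y ⬝ᵥ t)|
      ≤ C * exp (Fintype.card ι * ((m + B) ^ 2 / (2 * c))) * exp (-(c / 2 * ∑ k, t k ^ 2)) := by
  have hσ : 0 ≤ ∑ k, |t k| := Finset.sum_nonneg fun k _ => abs_nonneg (t k)
  have hyt : y ⬝ᵥ t ≤ B * ∑ k, |t k| :=
    (le_abs_self _).trans ((abs_dotProduct_le y t).trans (mul_le_mul_of_nonneg_right hy hσ))
  have hexponent := mul_sum_abs_sub_mul_sum_sq_le (m + B) hc t
  have hC : 0 ≤ C := nonneg_of_mul_nonneg_left ((abs_nonneg _).trans hφ) (exp_pos _)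
  rw [abs_mul, abs_exp]
  refine (mul_le_mul_of_nonneg_right hφ (exp_pos _).le).trans ?_
  rw [mul_assoc, mul_assoc, ← exp_add, ← exp_add]
  exact mul_le_mul_of_nonneg_left (exp_le_exp.2 (by linarith)) hC

noncomputable def dotProductCLM : (ι → ℝ) →L[ℝ] (ι → ℝ) →L[ℝ] ℝ :=
  LinearMap.toContinuousLinearMap
    ((LinearMap.toContinuousLinearMap : ((ι → ℝ) →ₗ[ℝ] ℝ) ≃ₗ[ℝ] _).toLinearMap ∘ₗ
      (dotProductBilin ℝ ℝ).flip)

@[simp]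
lemma dotProductCLM_apply (t v : ι → ℝ) : dotProductCLM t v = v ⬝ᵥ t := rfl

lemma norm_dotProductCLM_le (t : ι → ℝ) : ‖dotProductCLM t‖ ≤ ∑ k, |t k| :=
  ContinuousLinearMap.opNorm_le_bound _ (Finset.sum_nonneg fun k _ => abs_nonneg (t k))
    fun v => by
      rw [dotProductCLM_apply, Real.norm_eq_abs, mul_comm]
      exact abs_dotProduct_le v t

lemma norm_mul_exp_smul_dotProductCLM_le {B : ℝ} (hc : 0 < c) {t y : ι → ℝ}
    (hφ : |φ t| ≤ C * exp (m * ∑ k, |t k|)) (hq : q t ≤ -(c * ∑ k, t k ^ 2)) (hy : ‖y‖ ≤ B) :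
    ‖(φ t * exp (q t + y ⬝ᵥ t)) • dotProductCLM t‖
      ≤ 1 * C * exp (Fintype.card ι * ((m + 1 + B) ^ 2 / (2 * c)))
        * exp (-(c / 2 * ∑ k, t k ^ 2)) := by
  have hσ : 0 ≤ ∑ k, |t k| := Finset.sum_nonneg fun k _ => abs_nonneg (t k)
  have hweight : |(∑ k, |t k|) * φ t| ≤ 1 * C * exp ((m + 1) * ∑ k, |t k|) :=
    abs_mul_le_mul_exp_add_one zero_le_one (by rw [abs_of_nonneg hσ, one_mul]) hφ
  calc ‖(φ t * exp (q t + y ⬝ᵥ t)) • dotProductCLM t‖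
      ≤ |φ t * exp (q t + y ⬝ᵥ t)| * ∑ k, |t k| := by
        rw [norm_smul, Real.norm_eq_abs]
        exact mul_le_mul_of_nonneg_left (norm_dotProductCLM_le t) (abs_nonneg _)
    _ = |(∑ k, |t k|) * φ t * exp (q t + y ⬝ᵥ t)| := by
        rw [abs_mul, abs_mul, abs_mul, abs_of_nonneg hσ]
        ring
    _ ≤ _ := abs_mul_exp_le_gaussian (φ := fun t => (∑ k, |t k|) * φ t) hc hweight hq hy

variable (S : Set (ι → ℝ))

lemma integrable_mul_exp_dotProduct (hc : 0 < c) (hφc : Continuous φ) (hqc : Continuous q)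
    (hφ : ∀ t, |φ t| ≤ C * exp (m * ∑ k, |t k|)) (hq : ∀ t, q t ≤ -(c * ∑ k, t k ^ 2))
    (y : ι → ℝ) : Integrable (fun t => φ t * exp (q t + y ⬝ᵥ t)) (volume.restrict S) :=
  ((integrable_exp_neg_mul_sum_sq (half_pos hc)).const_mul _).restrict.mono'
    (by fun_prop : Continuous fun t => φ t * exp (q t + y ⬝ᵥ t)).aestronglyMeasurable
    (ae_of_all _ fun t => abs_mul_exp_le_gaussian hc (hφ t) (hq t) le_rfl)

lemma hasFDerivAt_integral_mul_exp_dotProduct (hc : 0 < c) (hφc : Continuous φ)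
    (hqc : Continuous q) (hφ : ∀ t, |φ t| ≤ C * exp (m * ∑ k, |t k|))
    (hq : ∀ t, q t ≤ -(c * ∑ k, t k ^ 2)) (y : ι → ℝ) :
    Integrable (fun t => (φ t * exp (q t + y ⬝ᵥ t)) • dotProductCLM t) (volume.restrict S) ∧
    HasFDerivAt (fun y' => ∫ t in S, φ t * exp (q t + y' ⬝ᵥ t))
      (∫ t in S, (φ t * exp (q t + y ⬝ᵥ t)) • dotProductCLM t) y := by
  have hcont : ∀ y' : ι → ℝ, Continuous fun t => φ t * exp (q t + y' ⬝ᵥ t) := fun y' => by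
    fun_prop
  have hF'_meas := ((hcont y).smul dotProductCLM.continuous).aestronglyMeasurable
    (μ := volume.restrict S)
  have hbound : ∀ t, ∀ y' ∈ Metric.ball y 1, ‖(φ t * exp (q t + y' ⬝ᵥ t)) • dotProductCLM t‖
      ≤ 1 * C * exp (Fintype.card ι * ((m + 1 + (‖y‖ + 1)) ^ 2 / (2 * c)))
        * exp (-(c / 2 * ∑ k, t k ^ 2)) := fun t y' hy' =>
    norm_mul_exp_smul_dotProductCLM_le hc (hφ t) (hq t)
      ((norm_le_norm_add_norm_sub' y' y).trans (by linarith [mem_ball_iff_norm.1 hy']))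
  have hbound_int := ((integrable_exp_neg_mul_sum_sq (half_pos hc)).const_mul
    (1 * C * exp (Fintype.card ι * ((m + 1 + (‖y‖ + 1)) ^ 2 / (2 * c))))).restrict (s := S)
  refine ⟨hbound_int.mono' hF'_meas
    (ae_of_all _ fun t => hbound t y (Metric.mem_ball_self one_pos)), ?_⟩
  refine hasFDerivAt_integral_of_dominated_of_fderiv_le (Metric.ball_mem_nhds y one_pos)
    (Filter.Eventually.of_forall fun y' => (hcont y').aestronglyMeasurable)
    (integrable_mul_exp_dotProduct S hc hφc hqc hφ hq y) hF'_meas (ae_of_all _ hbound)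
    hbound_int (ae_of_all _ fun t y' _ => ?_)
  have := (((dotProductCLM t).hasFDerivAt (x := y')).const_add (q t)).exp.const_mul (φ t)
  simpa only [mul_smul, dotProductCLM_apply] using this

lemma fderiv_integral_mul_exp_dotProduct_apply (hc : 0 < c) (hφc : Continuous φ)
    (hqc : Continuous q) (hφ : ∀ t, |φ t| ≤ C * exp (m * ∑ k, |t k|))
    (hq : ∀ t, q t ≤ -(c * ∑ k, t k ^ 2)) (y v : ι → ℝ) :
    fderiv ℝ (fun y' => ∫ t in S, φ t * exp (q t + y' ⬝ᵥ t)) y v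
      = ∫ t in S, (v ⬝ᵥ t * φ t) * exp (q t + y ⬝ᵥ t) := by
  obtain ⟨hint, hderiv⟩ := hasFDerivAt_integral_mul_exp_dotProduct S hc hφc hqc hφ hq y
  rw [hderiv.fderiv, ContinuousLinearMap.integral_apply hint]
  congr 1 with t
  simp only [_root_.smul_apply, dotProductCLM_apply, smul_eq_mul]
  ring

lemma hasDerivAt_integral_exp_add_mul (hc : 0 < c) {r : (ι → ℝ) → ℝ} {K : ℝ}
    (hqc : Continuous q) (hrc : Continuous r) (hq : ∀ t, q t ≤ -(c * ∑ k, t k ^ 2))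
    (hr : ∀ t, |r t| ≤ K * ∑ k, t k ^ 2) (y : ι → ℝ) :
    HasDerivAt (fun s : ℝ => ∫ t in S, exp (q t + s * r t + y ⬝ᵥ t))
      (∫ t in S, r t * exp (q t + y ⬝ᵥ t)) 0 := by
  have hbound_int : Integrable (fun t => |r t| * exp (-(c / 2 * ∑ k, t k ^ 2) + y ⬝ᵥ t))
      (volume.restrict S) := by
    refine integrable_mul_exp_dotProduct S (C := 2 * |K|) (m := 1) (half_pos hc) hrc.abs
      (by fun_prop) (fun t => ?_) (fun t => le_rfl) y
    rw [abs_abs, one_mul, mul_comm 2, mul_assoc]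
    exact (hr t).trans (mul_le_mul (le_abs_self K) (sum_sq_le_two_mul_exp_sum_abs t)
      (Finset.sum_nonneg fun k _ => sq_nonneg (t k)) (abs_nonneg K))
  have hF₀_int : Integrable (fun t => exp (q t + 0 * r t + y ⬝ᵥ t)) (volume.restrict S) := by
    simpa using integrable_mul_exp_dotProduct S (φ := fun _ => 1) (C := 1) (m := 0) hc
      continuous_const hqc (fun t => by simp) hq y
  have := hasDerivAt_integral_of_dominated_loc_of_deriv_le (x₀ := (0 : ℝ))
    (F := fun s t => exp (q t + s * r t + y ⬝ᵥ t))
    (F' := fun s t => r t * exp (q t + s * r t + y ⬝ᵥ t))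
    (Metric.ball_mem_nhds 0 (by positivity : 0 < c / (2 * (|K| + 1))))
    (Filter.Eventually.of_forall fun s => Continuous.aestronglyMeasurable (by fun_prop))
    hF₀_int (Continuous.aestronglyMeasurable (by fun_prop)) (ae_of_all _ fun t s hs => ?_)
    hbound_int (ae_of_all _ fun t s _ => ?_)
  · simpa only [zero_mul, add_zero] using this.2
  · rw [Real.norm_eq_abs, abs_mul, abs_exp]
    refine mul_le_mul_of_nonneg_left (exp_le_exp.2 (add_le_add_left ?_ _)) (abs_nonneg _)
    exact add_mul_le_neg_half_mul (Finset.sum_nonneg fun k _ => sq_nonneg (t k)) (hq t) (hr t)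
      (by simpa using hs)
  · have := (((hasDerivAt_id s).mul_const (r t)).const_add (q t)).add_const (y ⬝ᵥ t) |>.exp
    simpa [mul_comm] using this

noncomputable def quadExpIntegral (x : Matrix ι ι ℝ) (y : ι → ℝ) : ℝ :=
  ∫ t in S, exp (t ⬝ᵥ x *ᵥ t + y ⬝ᵥ t)

lemma fderiv_fderiv_quadExpIntegral_apply [DecidableEq ι] {x : Matrix ι ι ℝ}
    (hx : (-x).PosDef) (y : ι → ℝ) (i j : ι) :
    fderiv ℝ (fun y' => fderiv ℝ (quadExpIntegral S x) y' (Pi.single j 1)) y (Pi.single i 1)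
      = ∫ t in S, t i * t j * exp (t ⬝ᵥ x *ᵥ t + y ⬝ᵥ t) := by
  obtain ⟨c, hc, hq⟩ := exists_pos_dotProduct_mulVec_le_of_posDef_neg hx
  have hone : ∀ t : ι → ℝ, |(fun _ => (1 : ℝ)) t| ≤ 1 * exp (0 * ∑ k, |t k|) := by simp
  have hfirst : (fun y' => fderiv ℝ (quadExpIntegral S x) y' (Pi.single j 1))
      = fun y' => ∫ t in S, (Pi.single j 1 ⬝ᵥ t * 1) * exp (t ⬝ᵥ x *ᵥ t + y' ⬝ᵥ t) := by
    funext y'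
    rw [show quadExpIntegral S x = fun y' => ∫ t in S, 1 * exp (t ⬝ᵥ x *ᵥ t + y' ⬝ᵥ t) by
      simp only [one_mul]; rfl]
    exact fderiv_integral_mul_exp_dotProduct_apply S hc continuous_const (by fun_prop) hone hq
      y' _
  rw [hfirst, fderiv_integral_mul_exp_dotProduct_apply S hc (by fun_prop) (by fun_prop)
    (fun t => abs_mul_le_mul_exp_add_one (norm_nonneg _) (abs_dotProduct_le _ t) (hone t)) hq]
  simp only [single_dotProduct, one_mul, mul_one]

lemma hasDerivAt_quadExpIntegral_add_smul {x : Matrix ι ι ℝ} (hx : (-x).PosDef)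
    (E : Matrix ι ι ℝ) (y : ι → ℝ) :
    HasDerivAt (fun s : ℝ => quadExpIntegral S (x + s • E) y)
      (∫ t in S, t ⬝ᵥ E *ᵥ t * exp (t ⬝ᵥ x *ᵥ t + y ⬝ᵥ t)) 0 := by
  obtain ⟨c, hc, hq⟩ := exists_pos_dotProduct_mulVec_le_of_posDef_neg hx
  simp only [quadExpIntegral, add_mulVec, smul_mulVec, dotProduct_add, dotProduct_smul,
    smul_eq_mul]
  exact hasDerivAt_integral_exp_add_mul S hc (by fun_prop) (by fun_prop) hq
    (abs_dotProduct_mulVec_le E) y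

end

/-- The partial derivative in the independent entry `x i j`, `i < j`, is the derivative along the
symmetric perturbation `single i j 1 + single j i 1`. -/
theorem orthant_integral_x_derivatives (d : ℕ) (x : Matrix (Fin d) (Fin d) ℝ)
    (hx : (-x).PosDef) (y : Fin d → ℝ) :
    let G : Matrix (Fin d) (Fin d) ℝ → (Fin d → ℝ) → ℝ := fun x' y' =>
      ∫ t in {t : Fin d → ℝ | ∀ k, 0 ≤ t k},
        Real.exp (∑ a, ∑ b, x' a b * t a * t b + ∑ a, y' a * t a)
    (∀ i j : Fin d, i < j →
      deriv (fun s : ℝ =>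
          G (x + s • (Matrix.single i j (1:ℝ)
            + Matrix.single j i (1:ℝ))) y) 0
        = 2 * fderiv ℝ (fun y' => fderiv ℝ (G x) y' (Pi.single j 1)) y
            (Pi.single i 1)) ∧
    (∀ i : Fin d,
      deriv (fun s : ℝ => G (x + s • Matrix.single i i (1:ℝ)) y) 0
        = fderiv ℝ (fun y' => fderiv ℝ (G x) y' (Pi.single i 1)) y
            (Pi.single i 1)) := by
  intro G
  have hG : G = quadExpIntegral {t | ∀ k, 0 ≤ t k} := by
    funext x' y'
    simp only [G, quadExpIntegral, sum_sum_mul_mul_eq_dotProduct_mulVec]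
    rfl
  simp only [hG]
  refine ⟨fun i j _ => ?_, fun i => ?_⟩
  · rw [(hasDerivAt_quadExpIntegral_add_smul _ hx _ y).deriv,
      fderiv_fderiv_quadExpIntegral_apply _ hx, ← integral_const_mul]
    congr 1 with t
    rw [add_mulVec, dotProduct_add, dotProduct_single_one_mulVec, dotProduct_single_one_mulVec]
    ring
  · rw [(hasDerivAt_quadExpIntegral_add_smul _ hx _ y).deriv,
      fderiv_fderiv_quadExpIntegral_apply _ hx]
    simp_rw [dotProduct_single_one_mulVec]
end

section
/- For each sign vector ε ∈ {±1}^d let E_ε = {t ∈ ℝ^d : ε_i t_i > 0 for all i} and, for −x symmetric positive definite and y ∈ ℝ^d, define g_ε(x,y) = ∫_{E_ε} exp(tᵀxt + yᵀt) dt. Then the 2^d functions {g_ε : ε ∈ {±1}^d}, viewed as functions of (x,y) on the domain where −x is positive definite, are linearly independent over ℝ. -/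
/-!
Take `x = -1` and `y = s • σ`, where `σ i = ±1` is the sign pattern of a fixed orthant `ε`. Then
`g_ε'` factors as `∏ i F (±s)` with `F a = ∫_{t > 0} exp (-t² + a t)`, the sign being `+` exactly
where `ε'` and `ε` agree. Dividing by `F s ^ d`, the `ε`-term becomes `1`, while every other term
contains a factor `F (-s) / F s ≤ s⁻¹ / F 0`, which tends to `0` as `s → ∞`.
-/

open MeasureTheory Real Matrix Set Filter Topology

theorem eq_zero_of_sum_mul_eq_zero_of_tendsto_ite {ι α R : Type*} [Fintype ι] [DecidableEq ι]
    [Semiring R] [TopologicalSpace R] [ContinuousAdd R] [ContinuousMul R] [T2Space R]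
    {l : Filter α} [l.NeBot] {c : ι → R} {f : ι → α → R} (j : ι)
    (hsum : ∀ᶠ s in l, ∑ i, c i * f i s = 0)
    (hf : ∀ i, Tendsto (f i) l (𝓝 (if i = j then 1 else 0))) : c j = 0 := by
  have hlim : Tendsto (fun s => ∑ i, c i * f i s) l (𝓝 (c j)) := by
    simpa [mul_ite] using tendsto_finsetSum Finset.univ fun i _ => (hf i).const_mul (c i)
  exact tendsto_nhds_unique hlim (tendsto_const_nhds.congr' (hsum.mono fun _ hs => hs.symm))

theorem integrable_exp_neg_sq_add_mul (a : ℝ) :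
    Integrable fun t : ℝ => exp (-t ^ 2 + a * t) := by
  have hsq : (fun t : ℝ => exp (-t ^ 2 + a * t))
      = fun t => exp (a ^ 2 / 4) * exp (-1 * (t - a / 2) ^ 2) := by
    funext t; rw [← exp_add]; ring_nf
  rw [hsq]
  exact ((integrable_exp_neg_mul_sq one_pos).comp_sub_right (a / 2)).const_mul _

noncomputable def halfGaussianIntegral (a : ℝ) : ℝ := ∫ t in Ioi 0, exp (-t ^ 2 + a * t)

theorem halfGaussianIntegral_pos (a : ℝ) : 0 < halfGaussianIntegral a := by
  refine (setIntegral_pos_iff_support_of_nonneg_ae (.of_forall fun t => (exp_pos _).le)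
    (integrable_exp_neg_sq_add_mul a).integrableOn).2 ?_
  simp [Function.support, exp_ne_zero]

theorem halfGaussianIntegral_mono : Monotone halfGaussianIntegral := by
  intro a b hab
  refine setIntegral_mono_on (integrable_exp_neg_sq_add_mul a).integrableOn
    (integrable_exp_neg_sq_add_mul b).integrableOn measurableSet_Ioi fun t ht => ?_
  gcongr
  exact le_of_lt ht

theorem halfGaussianIntegral_neg_le_inv {s : ℝ} (hs : 0 < s) :
    halfGaussianIntegral (-s) ≤ s⁻¹ := by
  calc halfGaussianIntegral (-s) ≤ ∫ t in Ioi 0, exp (-s * t) :=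
        setIntegral_mono_on (integrable_exp_neg_sq_add_mul _).integrableOn
          (integrableOn_exp_mul_Ioi (neg_neg_of_pos hs) 0) measurableSet_Ioi
          fun t _ => exp_le_exp.2 (by nlinarith [sq_nonneg t])
    _ = s⁻¹ := by
        rw [integral_exp_mul_Ioi (neg_neg_of_pos hs), mul_zero, exp_zero, neg_div_neg_eq, one_div]

theorem tendsto_halfGaussianIntegral_neg_div :
    Tendsto (fun s => halfGaussianIntegral (-s) / halfGaussianIntegral s) atTop (𝓝 0) := by
  have hbound : ∀ᶠ s in atTop,
      halfGaussianIntegral (-s) / halfGaussianIntegral s ≤ s⁻¹ / halfGaussianIntegral 0 := by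
    filter_upwards [eventually_gt_atTop 0] with s hs
    exact div_le_div₀ (inv_nonneg.2 hs.le) (halfGaussianIntegral_neg_le_inv hs)
      (halfGaussianIntegral_pos 0) (halfGaussianIntegral_mono hs.le)
  refine tendsto_of_tendsto_of_tendsto_of_le_of_le' tendsto_const_nhds
    (by simpa using tendsto_inv_atTop_zero.div_const (halfGaussianIntegral 0))
    (.of_forall fun s => ?_) hbound
  exact div_nonneg (halfGaussianIntegral_pos _).le (halfGaussianIntegral_pos _).le

theorem tendsto_halfGaussianIntegral_ite_div (p : Prop) [Decidable p] :
    Tendsto (fun s => halfGaussianIntegral (if p then s else -s) / halfGaussianIntegral s)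
      atTop (𝓝 (if p then 1 else 0)) := by
  by_cases hp : p
  · simp [hp, div_self (halfGaussianIntegral_pos _).ne']
  · simpa [hp] using tendsto_halfGaussianIntegral_neg_div

theorem setIntegral_Iio_exp_neg_sq_add_mul (a : ℝ) :
    ∫ t in Iio 0, exp (-t ^ 2 + a * t) = halfGaussianIntegral (-a) := by
  rw [halfGaussianIntegral, ← integral_Iic_eq_integral_Iio, ← neg_zero, ← integral_comp_neg_Ioi]
  simp only [neg_zero, even_two, Even.neg_pow, mul_neg, neg_mul]

theorem setIntegral_ite_exp_neg_sq_add_mul (b : Bool) (a : ℝ) :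
    ∫ t in (if b then Ioi 0 else Iio 0), exp (-t ^ 2 + a * t)
      = halfGaussianIntegral (if b then a else -a) := by
  cases b
  · exact setIntegral_Iio_exp_neg_sq_add_mul a
  · rfl

theorem sum_sum_neg_one_mul_mul {ι : Type*} [Fintype ι] [DecidableEq ι] (t : ι → ℝ) :
    ∑ i, ∑ j, (-1 : Matrix ι ι ℝ) i j * t i * t j = -∑ i, t i ^ 2 := by
  simp [Matrix.one_apply, ite_mul, sq]

theorem orthant_eq_univ_pi {ι : Type*} (ε : ι → Bool) :
    {t : ι → ℝ | ∀ i, if ε i then 0 < t i else t i < 0}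
      = univ.pi fun i => if ε i then Ioi 0 else Iio 0 := by
  ext t
  simp only [mem_ofPred_eq, mem_univ_pi]
  refine forall_congr' fun i => ?_
  split <;> rfl

theorem setIntegral_orthant_exp {ι : Type*} [Fintype ι] (ε : ι → Bool) (y : ι → ℝ) :
    ∫ t in {t : ι → ℝ | ∀ i, if ε i then 0 < t i else t i < 0},
        exp (-∑ i, t i ^ 2 + ∑ i, y i * t i)
      = ∏ i, halfGaussianIntegral (if ε i then y i else -y i) := by
  have hexp : ∀ t : ι → ℝ, exp (-∑ i, t i ^ 2 + ∑ i, y i * t i)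
      = ∏ i, exp (-t i ^ 2 + y i * t i) := by
    intro t
    rw [← exp_sum, Finset.sum_add_distrib, Finset.sum_neg_distrib]
  simp_rw [hexp]
  rw [orthant_eq_univ_pi, volume_pi, Measure.restrict_pi_pi]
  exact (integral_fintype_prod_eq_prod fun i (u : ℝ) => exp (-u ^ 2 + y i * u)).trans
    (Finset.prod_congr rfl fun i _ => setIntegral_ite_exp_neg_sq_add_mul (ε i) (y i))

theorem ite_ite_neg_eq (b b' : Bool) (s : ℝ) :
    (if b' then (if b then s else -s) else -(if b then s else -s)) = if b' = b then s else -s := by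
  cases b <;> cases b' <;> simp

/-- For ε ∈ {±1}^d (encoded by ε : Fin d → Bool, true ↔ +1) let
E_ε = {t : ε_i t_i > 0 ∀i} and g_ε(x,y) = ∫_{E_ε} exp(tᵀxt + yᵀt) dt. Then the 2^d
functions g_ε, as functions of (x,y) on the domain where −x is positive definite,
are linearly independent over ℝ. -/
theorem orthant_integrals_linearly_independent (d : ℕ)
    (c : (Fin d → Bool) → ℝ)
    (h : ∀ (x : Matrix (Fin d) (Fin d) ℝ) (y : Fin d → ℝ), (-x).PosDef →
      ∑ ε : Fin d → Bool, c ε *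
        ∫ t in {t : Fin d → ℝ | ∀ i, if ε i then 0 < t i else t i < 0},
          Real.exp (∑ i, ∑ j, x i j * t i * t j + ∑ i, y i * t i) = 0) :
    ∀ ε : Fin d → Bool, c ε = 0 := by
  intro ε
  refine eq_zero_of_sum_mul_eq_zero_of_tendsto_ite (l := atTop)
    (f := fun ε' s =>
      ∏ i, halfGaussianIntegral (if ε' i = ε i then s else -s) / halfGaussianIntegral s)
    ε (.of_forall fun s => ?_) fun ε' => ?_
  · have hs := h (-1) (fun i => if ε i then s else -s) (by simpa using PosDef.one)
    simp only [sum_sum_neg_one_mul_mul, setIntegral_orthant_exp, ite_ite_neg_eq] at hs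
    simp only [Finset.prod_div_distrib, ← mul_div_assoc, ← Finset.sum_div, hs, zero_div]
  · convert tendsto_finsetProd Finset.univ fun i _ =>
      tendsto_halfGaussianIntegral_ite_div (ε' i = ε i) using 2
    simp [Fintype.prod_boole, funext_iff]
end
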